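/- Let β ∈ (0,1), κ > 0, κ_g > 0, κ_B > 0, σ_min > 0, and let σ ≥ σ_min. Suppose g, e, s are nonnegative reals with e ≤ κ(1−β)²(g/σ)², g ≤ κ_g, and s² ≥ (1−β)·g/(κ_B+σ). Then e ≤ κ·(κ_g/σ_min)·(κ_B/σ_min + 1)·s². -/

import Mathlib

/-! Split `((1 - β) g)²` into one factor bounded by `κg` and one bounded by `s² (κB + σ)` via the
step condition; what remains, `(κB + σ) / σ²`, is decreasing in `σ`, so its value at `σmin` bounds it. -/

theorem add_div_sq_le_of_le {K : Type*} [Field K] [LinearOrder K] [IsStrictOrderedRing K]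
    {a m σ : K} (ha : 0 ≤ a) (hm : 0 < m) (hmσ : m ≤ σ) :
    (a + σ) / σ ^ 2 ≤ (a / m + 1) / m := by
  have hσ : 0 < σ := hm.trans_le hmσ
  calc (a + σ) / σ ^ 2 = a / σ ^ 2 + 1 / σ := by field_simp
    _ ≤ a / m ^ 2 + 1 / m := by gcongr
    _ = (a / m + 1) / m := by field_simp

theorem stmt_1_general (β κ κg κB σmin σ g e s : ℝ)
    (hβ : 0 < β) (hβ1 : β < 1) (hκ : 0 < κ) (hκB : 0 < κB)
    (hσmin : 0 < σmin) (hσ : σmin ≤ σ)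
    (hg : 0 ≤ g)
    (hacc : e ≤ κ * (1 - β) ^ 2 * (g / σ) ^ 2)
    (hgb : g ≤ κg)
    (hstep : s ^ 2 ≥ (1 - β) * g / (κB + σ)) :
    e ≤ κ * (κg / σmin) * (κB / σmin + 1) * s ^ 2 := by
  have hσ0 : 0 < σ := hσmin.trans_le hσ
  have hκg : 0 ≤ κg := hg.trans hgb
  have hdamped_nonneg : 0 ≤ (1 - β) * g := mul_nonneg (by linarith) hg
  have hdamped_le_κg : (1 - β) * g ≤ κg := by nlinarith
  have hdamped_le_step : (1 - β) * g ≤ s ^ 2 * (κB + σ) :=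
    (div_le_iff₀ (by positivity)).1 hstep
  calc e ≤ κ * ((1 - β) * g) ^ 2 / σ ^ 2 := by convert hacc using 1; ring
    _ ≤ κ * (κg * (s ^ 2 * (κB + σ))) / σ ^ 2 := by
      rw [sq]
      gcongr
    _ = κ * κg * s ^ 2 * ((κB + σ) / σ ^ 2) := by ring
    _ ≤ κ * κg * s ^ 2 * ((κB / σmin + 1) / σmin) :=
      mul_le_mul_of_nonneg_left (add_div_sq_le_of_le hκB.le hσmin hσ) (by positivity)
    _ = κ * (κg / σmin) * (κB / σmin + 1) * s ^ 2 := by ring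

theorem stmt_1 (β κ κg κB σmin σ g e s : ℝ)
    (hβ : 0 < β) (hβ1 : β < 1) (hκ : 0 < κ) (hκg : 0 < κg) (hκB : 0 < κB)
    (hσmin : 0 < σmin) (hσ : σmin ≤ σ)
    (hg : 0 ≤ g) (he : 0 ≤ e) (hs : 0 ≤ s)
    (hacc : e ≤ κ * (1 - β) ^ 2 * (g / σ) ^ 2)
    (hgb : g ≤ κg)
    (hstep : s ^ 2 ≥ (1 - β) * g / (κB + σ)) :
    e ≤ κ * (κg / σmin) * (κB / σmin + 1) * s ^ 2 :=
  stmt_1_general β κ κg κB σmin σ g e s hβ hβ1 hκ hκB hσmin hσ hg hacc hgb hstep
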